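/- Multiplication by τ is injective on the ring R = 𝔽₂[τ, ρ, x]/(x², xρ), i.e., for all r ∈ R, τ·r = 0 implies r = 0. -/
import Mathlib


noncomputable abbrev A13 := MvPolynomial (Fin 3) (ZMod 2)

/-- the relations x² = 0 and x·ρ = 0, where τ = X 0, ρ = X 1, x = X 2 -/
noncomputable abbrev I13 : Ideal A13 :=
  Ideal.span {MvPolynomial.X 2 ^ 2, MvPolynomial.X 2 * MvPolynomial.X 1}

/-- R = 𝔽₂[τ, ρ, x]/(x², xρ) -/
noncomputable abbrev R13 := A13 ⧸ I13

lemma gens_eq13 :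
    ({MvPolynomial.X 2 ^ 2, MvPolynomial.X 2 * MvPolynomial.X 1} : Set A13) =
      (fun s => MvPolynomial.monomial s (1 : ZMod 2)) ''
        {Finsupp.single 2 2, Finsupp.single 2 1 + Finsupp.single 1 1} := by
  rw [Set.image_insert_eq, Set.image_singleton]
  congr 1
  · rw [MvPolynomial.X_pow_eq_monomial]
  · congr 1
    rw [MvPolynomial.X, MvPolynomial.X, MvPolynomial.monomial_mul, one_mul]

/-- Multiplication by τ is injective on `R = 𝔽₂[τ,ρ,x]/(x²,xρ)`. -/
theorem stmt13 (r : R13)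
    (h : Ideal.Quotient.mk I13 (MvPolynomial.X 0) * r = 0) : r = 0 := by
  obtain ⟨p, rfl⟩ := Ideal.Quotient.mk_surjective r
  rw [← map_mul] at h
  rw [Ideal.Quotient.eq_zero_iff_mem] at h ⊢
  rw [show I13 = _ from congrArg Ideal.span gens_eq13,
    MvPolynomial.mem_ideal_span_monomial_image] at h ⊢
  intro m hm
  have hm' : Finsupp.single (0 : Fin 3) 1 + m ∈
      (MvPolynomial.X (0 : Fin 3) * p).support := by
    rw [MvPolynomial.mem_support_iff, MvPolynomial.coeff_X_mul]
    exact MvPolynomial.mem_support_iff.mp hm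
  obtain ⟨si, hsi, hle⟩ := h _ hm'
  refine ⟨si, hsi, fun j => ?_⟩
  have hj := hle j
  have h0 : si 0 = 0 := by
    rcases hsi with rfl | rfl <;> simp
  by_cases hj0 : j = 0
  · subst hj0; simp [h0]
  · simpa [Finsupp.single_apply, Ne.symm hj0] using hj
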